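/- arXiv:math/0303379 — 2 statements merged into one kernel-verified Lean document; each statement's English description precedes it below -/
import Mathlib

section
/- (Superadditivity of uncertainty for symmetric convex games.) Let g, h : ℕ → ℝ be functions whose increments are nonnegative and nondecreasing, i.e., g(k+1) − g(k) ≥ 0 and g(k+1) − g(k) ≤ g(k+2) − g(k+1) for all k, and similarly for h. Define the symmetric convex games G(S) = g(|S|) and H(S) = h(|S|) on N players. Then for every player i, R_i(G + H) ≥ R_i(G) + R_i(H), where (G + H)(S) = G(S) + H(S). -/
open Finset

noncomputable def shapleyWeight (N : ℕ) (S : Finset (Fin N)) : ℝ :=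
  ((Nat.factorial S.card : ℝ) * (Nat.factorial (N - S.card - 1) : ℝ)) / (Nat.factorial N : ℝ)

noncomputable def marginal (N : ℕ) (G : Finset (Fin N) → ℝ) (i : Fin N)
    (S : Finset (Fin N)) : ℝ :=
  G (insert i S) - G S

noncomputable def shapleyValue (N : ℕ) (G : Finset (Fin N) → ℝ) (i : Fin N) : ℝ :=
  ∑ S ∈ (Finset.univ.erase i).powerset, shapleyWeight N S * marginal N G i S

noncomputable def shapleyUncertainty (N : ℕ) (G : Finset (Fin N) → ℝ) (i : Fin N) : ℝ :=
  ∑ S ∈ (Finset.univ.erase i).powerset,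
    shapleyWeight N S * (marginal N G i S - shapleyValue N G i) ^ 2

/-! The marginal contributions of `G + H` are the sums of those of `G` and `H`, so the Shapley
uncertainty, being the variance of the marginal contribution under the Shapley weights (a
probability distribution on the coalitions without `i`), satisfies
`R(G + H) = R(G) + R(H) + 2 Cov(dG, dH)`. For symmetric convex games both marginal contributions
are nondecreasing functions of `|S|`, hence similarly ordered, and the weighted Chebyshev sum
inequality makes the covariance nonnegative. -/

theorem MonovaryOn.sum_mul_sum_le_sum_mul_sum_mul {ι : Type*} {s : Finset ι} {p f k : ι → ℝ}
    (hfk : MonovaryOn f k s) (hp : ∀ i ∈ s, 0 ≤ p i) :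
    (∑ i ∈ s, p i * f i) * ∑ i ∈ s, p i * k i ≤ (∑ i ∈ s, p i) * ∑ i ∈ s, p i * (f i * k i) := by
  have hpairs : 0 ≤ ∑ i ∈ s, ∑ j ∈ s, p i * p j * ((f j - f i) * (k j - k i)) :=
    sum_nonneg fun i hi => sum_nonneg fun j hj =>
      mul_nonneg (mul_nonneg (hp i hi) (hp j hj)) (hfk.sub_mul_sub_nonneg hi hj)
  have hexpand : ∑ i ∈ s, ∑ j ∈ s, p i * p j * ((f j - f i) * (k j - k i)) =
      2 * ((∑ i ∈ s, p i) * ∑ i ∈ s, p i * (f i * k i)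
        - (∑ i ∈ s, p i * f i) * ∑ i ∈ s, p i * k i) := by
    have hterm : ∀ i j, p i * p j * ((f j - f i) * (k j - k i)) =
        p i * (p j * (f j * k j)) - (p i * k i) * (p j * f j)
          - (p i * f i) * (p j * k j) + (p i * (f i * k i)) * p j := fun i j => by ring
    simp only [hterm, sum_add_distrib, sum_sub_distrib, ← mul_sum, ← sum_mul]
    ring
  linarith

theorem MonovaryOn.sum_mul_sub_mul_sub_nonneg {ι : Type*} {s : Finset ι} {p f k : ι → ℝ}
    (hfk : MonovaryOn f k s) (hp : ∀ i ∈ s, 0 ≤ p i) (hp1 : ∑ i ∈ s, p i = 1) :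
    0 ≤ ∑ i ∈ s, p i * ((f i - ∑ j ∈ s, p j * f j) * (k i - ∑ j ∈ s, p j * k j)) := by
  have hcheb := hfk.sum_mul_sum_le_sum_mul_sum_mul hp
  rw [hp1, one_mul] at hcheb
  set A := ∑ j ∈ s, p j * f j
  set B := ∑ j ∈ s, p j * k j
  have hterm : ∀ i, p i * ((f i - A) * (k i - B)) =
      p i * (f i * k i) - p i * f i * B - p i * k i * A + p i * (A * B) := fun i => by ring
  simp only [hterm, sum_add_distrib, sum_sub_distrib, ← sum_mul, hp1]
  linarith

section Shapley

variable {N : ℕ}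

theorem sum_shapleyWeight (i : Fin N) :
    ∑ S ∈ (univ.erase i).powerset, shapleyWeight N S = 1 := by
  cases N with
  | zero => exact i.elim0
  | succ n =>
    have hcard : (univ.erase i).card = n := by simp [card_erase_of_mem]
    have hterm : ∀ m ∈ range (n + 1), n.choose m •
        ((m.factorial : ℝ) * ((n + 1 - m - 1).factorial : ℝ) / ((n + 1).factorial : ℝ)) =
          1 / (n + 1 : ℝ) := by
      intro m hm
      have hmn : m ≤ n := Nat.lt_succ_iff.mp (mem_range.mp hm)
      have hfact : (n.choose m : ℝ) * m.factorial * (n - m).factorial = n.factorial := by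
        exact_mod_cast Nat.choose_mul_factorial_mul_factorial hmn
      rw [show n + 1 - m - 1 = n - m by omega, nsmul_eq_mul, Nat.factorial_succ]
      push_cast
      field_simp
      linear_combination hfact
    simp only [shapleyWeight]
    rw [sum_powerset_apply_card fun m =>
      (m.factorial : ℝ) * ((n + 1 - m - 1).factorial : ℝ) / ((n + 1).factorial : ℝ)]
    rw [hcard, sum_congr rfl hterm, sum_const, card_range, nsmul_eq_mul]
    push_cast
    field_simp

theorem shapleyWeight_nonneg (S : Finset (Fin N)) : 0 ≤ shapleyWeight N S := by
  unfold shapleyWeight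
  positivity

noncomputable def shapleyCovariance (N : ℕ) (G H : Finset (Fin N) → ℝ) (i : Fin N) : ℝ :=
  ∑ S ∈ (univ.erase i).powerset, shapleyWeight N S *
    ((marginal N G i S - shapleyValue N G i) * (marginal N H i S - shapleyValue N H i))

variable (G H : Finset (Fin N) → ℝ) (i : Fin N)

theorem marginal_add (S : Finset (Fin N)) :
    marginal N (fun T => G T + H T) i S = marginal N G i S + marginal N H i S := by
  simp only [marginal]
  ring

theorem shapleyValue_add :
    shapleyValue N (fun T => G T + H T) i = shapleyValue N G i + shapleyValue N H i := by
  simp only [shapleyValue, marginal_add, mul_add, sum_add_distrib]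

theorem shapleyUncertainty_add :
    shapleyUncertainty N (fun T => G T + H T) i =
      shapleyUncertainty N G i + shapleyUncertainty N H i + 2 * shapleyCovariance N G H i := by
  simp only [shapleyUncertainty, shapleyCovariance, marginal_add, shapleyValue_add, mul_sum,
    ← sum_add_distrib]
  exact sum_congr rfl fun S _ => by ring

theorem shapleyCovariance_nonneg
    (hGH : MonovaryOn (marginal N G i) (marginal N H i) (univ.erase i).powerset) :
    0 ≤ shapleyCovariance N G H i :=
  hGH.sum_mul_sub_mul_sub_nonneg (fun S _ => shapleyWeight_nonneg S) (sum_shapleyWeight i)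

end Shapley

section SymmetricGames

variable {N : ℕ} {i : Fin N}

theorem marginal_card_of_notMem (g : ℕ → ℝ) {S : Finset (Fin N)} (hi : i ∉ S) :
    marginal N (fun T => g T.card) i S = fwdDiff 1 g S.card := by
  simp [marginal, fwdDiff, card_insert_of_notMem hi]

theorem monotone_fwdDiff_of_le {g : ℕ → ℝ} (hg : ∀ k, g (k + 1) - g k ≤ g (k + 2) - g (k + 1)) :
    Monotone (fwdDiff 1 g) :=
  monotone_nat_of_le_succ hg

theorem monovaryOn_marginal_card {g h : ℕ → ℝ} (hg : Monotone (fwdDiff 1 g))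
    (hh : Monotone (fwdDiff 1 h)) :
    MonovaryOn (marginal N (fun S => g S.card) i) (marginal N (fun S => h S.card) i)
      (univ.erase i).powerset := by
  have hi : ∀ S ∈ ((univ.erase i).powerset : Set (Finset (Fin N))), i ∉ S :=
    fun S hS hiS => notMem_erase i univ (mem_powerset.mp (mem_coe.mp hS) hiS)
  intro S hS T hT hlt
  rw [marginal_card_of_notMem _ (hi S hS), marginal_card_of_notMem _ (hi T hT)] at hlt ⊢
  exact hg.monovary hh hlt

end SymmetricGames

theorem shapley_uncertainty_superadditive_symmetric_convex_general (N : ℕ)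
    (g h : ℕ → ℝ)
    (hgconv : ∀ k, g (k + 1) - g k ≤ g (k + 2) - g (k + 1))
    (hhconv : ∀ k, h (k + 1) - h k ≤ h (k + 2) - h (k + 1))
    (i : Fin N) :
    shapleyUncertainty N (fun S => g S.card + h S.card) i ≥
      shapleyUncertainty N (fun S => g S.card) i +
        shapleyUncertainty N (fun S => h S.card) i := by
  have hcov := shapleyCovariance_nonneg (fun S => g S.card) (fun S => h S.card) i
    (monovaryOn_marginal_card (monotone_fwdDiff_of_le hgconv) (monotone_fwdDiff_of_le hhconv))
  rw [ge_iff_le, shapleyUncertainty_add (fun S => g S.card) (fun S => h S.card)]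
  linarith

theorem shapley_uncertainty_superadditive_symmetric_convex (N : ℕ) (hN : 1 ≤ N)
    (g h : ℕ → ℝ)
    (hg0 : ∀ k, 0 ≤ g (k + 1) - g k)
    (hgconv : ∀ k, g (k + 1) - g k ≤ g (k + 2) - g (k + 1))
    (hh0 : ∀ k, 0 ≤ h (k + 1) - h k)
    (hhconv : ∀ k, h (k + 1) - h k ≤ h (k + 2) - h (k + 1))
    (i : Fin N) :
    shapleyUncertainty N (fun S => g S.card + h S.card) i ≥
      shapleyUncertainty N (fun S => g S.card) i +
        shapleyUncertainty N (fun S => h S.card) i :=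
  shapley_uncertainty_superadditive_symmetric_convex_general N g h hgconv hhconv i
end

section
/- (Equivalence of the subset and ordering formulations of the Shapley distribution.) Fix N ≥ 1 and a player i ∈ Fin N. For every function φ : Finset (Fin N) → ℝ, the weighted sum over coalitions equals the average over uniformly random orderings: Σ_{S ⊆ A\{i}} (|S|!·(N − |S| − 1)!/N!)·φ(S) = (1/N!) · Σ_{σ ∈ permutations of Fin N} φ(P_σ(i)), where P_σ(i) = {j : σ⁻¹(j) < σ⁻¹(i)} is the set of players preceding i in the ordering σ. -/
open Finset



variable {N : ℕ}

section Fiber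
variable (i : Fin N) (S : Finset (Fin N))

private lemma aux_pos (hiS : i ∉ S) : S.card < N := by
  have h : insert i S ⊆ Finset.univ := Finset.subset_univ _
  have := Finset.card_le_card h
  rw [Finset.card_insert_of_notMem hiS] at this
  simpa using this

private lemma aux_pos_eq (τ : Equiv.Perm (Fin N)) (hτ : ∀ j, τ j < τ i ↔ j ∈ S) :
    (τ i : ℕ) = S.card := by
  have himg : Finset.Iio (τ i) = S.image τ := by
    ext x
    simp only [Finset.mem_Iio, Finset.mem_image]
    constructor
    · intro hx
      refine ⟨τ.symm x, ?_, by simp⟩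
      rw [← hτ]; simpa using hx
    · rintro ⟨j, hj, rfl⟩
      exact (hτ j).mpr hj
  have h1 : (Finset.Iio (τ i)).card = (τ i : ℕ) := Fin.card_Iio (τ i)
  rw [himg, Finset.card_image_of_injective _ τ.injective] at h1
  omega

theorem fiber_card (hiS : i ∉ S) :
    (Finset.univ.filter fun σ : Equiv.Perm (Fin N) =>
        (Finset.univ.filter fun j => σ.symm j < σ.symm i) = S).card =
      Nat.factorial S.card * Nat.factorial (N - S.card - 1) := by
  classical
  set k : ℕ := S.card with hk
  have hkN : k < N := aux_pos i S hiS
  set ki : Fin N := ⟨k, hkN⟩ with hki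
  rw [← Fintype.card_subtype]
  have e0 : {σ : Equiv.Perm (Fin N) //
        (Finset.univ.filter fun j => σ.symm j < σ.symm i) = S} ≃
      {τ : Equiv.Perm (Fin N) // ∀ j, τ j < τ i ↔ j ∈ S} :=
    Equiv.subtypeEquiv
      (⟨Equiv.symm, Equiv.symm, fun _ => Equiv.symm_symm _, fun _ => Equiv.symm_symm _⟩ :
        Equiv.Perm (Fin N) ≃ Equiv.Perm (Fin N))
      (fun σ => by
        simp only [Finset.ext_iff, Finset.mem_filter, Finset.mem_univ, true_and]
        exact Iff.rfl)
  rw [Fintype.card_congr e0]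
  have hfact : ∀ τ : Equiv.Perm (Fin N), (∀ j, τ j < τ i ↔ j ∈ S) → τ i = ki := by
    intro τ hτ
    exact Fin.ext (aux_pos_eq i S τ hτ)
  have h1 : ∀ (τ : {τ : Equiv.Perm (Fin N) // ∀ j, τ j < τ i ↔ j ∈ S}) (j : Fin N),
      j ∈ S ↔ (τ.1 j : Fin N) < ki := by
    intro τ j
    rw [← hfact τ.1 τ.2, ← τ.2 j]
  have hkieq : ∀ (τ : {τ : Equiv.Perm (Fin N) // ∀ j, τ j < τ i ↔ j ∈ S}) (j : Fin N),
      τ.1 j = ki ↔ j = i := by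
    intro τ j
    rw [← hfact τ.1 τ.2]
    exact EmbeddingLike.apply_eq_iff_eq τ.1
  have h2 : ∀ (τ : {τ : Equiv.Perm (Fin N) // ∀ j, τ j < τ i ↔ j ∈ S}) (j : Fin N),
      (j ∉ S ∧ j ≠ i) ↔ (¬ (τ.1 j : Fin N) < ki ∧ τ.1 j ≠ ki) := by
    intro τ j
    have a := h1 τ j
    have b := hkieq τ j
    constructor
    · rintro ⟨hs, hni⟩
      exact ⟨fun hc => hs (a.mpr hc), fun hc => hni (b.mp hc)⟩
    · rintro ⟨hs, hni⟩
      exact ⟨fun hc => hs (a.mp hc), fun hc => hni (b.mpr hc)⟩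
  let f : {τ : Equiv.Perm (Fin N) // ∀ j, τ j < τ i ↔ j ∈ S} →
      ({j : Fin N // j ∈ S} ≃ {x : Fin N // x < ki}) ×
      ({j : Fin N // j ∉ S ∧ j ≠ i} ≃ {x : Fin N // ¬ x < ki ∧ x ≠ ki}) :=
    fun τ => (Equiv.subtypeEquiv τ.1 (h1 τ), Equiv.subtypeEquiv τ.1 (h2 τ))
  have hbij : Function.Bijective f := by
    constructor
    · intro τ τ' h
      rw [Prod.ext_iff] at h
      obtain ⟨ha, hb⟩ := h
      apply Subtype.ext
      apply Equiv.ext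
      intro j
      by_cases hj : j ∈ S
      · exact congrArg Subtype.val (Equiv.ext_iff.mp ha ⟨j, hj⟩)
      · by_cases hij : j = i
        · rw [hij, hfact τ.1 τ.2, hfact τ'.1 τ'.2]
        · exact congrArg Subtype.val (Equiv.ext_iff.mp hb ⟨j, hj, hij⟩)
    · rintro ⟨e₁, e₂⟩
      let F1 : Fin N → Fin N := fun j =>
        if h : j ∈ S then (e₁ ⟨j, h⟩ : Fin N)
        else if h' : j = i then ki else (e₂ ⟨j, h, h'⟩ : Fin N)
      let F2 : Fin N → Fin N := fun x =>
        if h : x < ki then (e₁.symm ⟨x, h⟩ : Fin N)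
        else if h' : x = ki then i else (e₂.symm ⟨x, h, h'⟩ : Fin N)
      have hF1S : ∀ (j : Fin N) (h : j ∈ S), F1 j = (e₁ ⟨j, h⟩ : Fin N) := by
        intro j h; simp only [F1]; rw [dif_pos h]
      have hF1i : F1 i = ki := by
        simp only [F1]; rw [dif_neg hiS]; simp
      have hF1o : ∀ (j : Fin N) (h : j ∉ S) (h' : j ≠ i),
          F1 j = (e₂ ⟨j, h, h'⟩ : Fin N) := by
        intro j h h'; simp only [F1]; rw [dif_neg h, dif_neg h']
      have hF2lt : ∀ (x : Fin N) (h : x < ki), F2 x = (e₁.symm ⟨x, h⟩ : Fin N) := by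
        intro x h; simp only [F2]; rw [dif_pos h]
      have hF2ki : F2 ki = i := by
        simp only [F2]; rw [dif_neg (lt_irrefl ki)]; simp
      have hF2o : ∀ (x : Fin N) (h : ¬ x < ki) (h' : x ≠ ki),
          F2 x = (e₂.symm ⟨x, h, h'⟩ : Fin N) := by
        intro x h h'; simp only [F2]; rw [dif_neg h, dif_neg h']
      have hleft : ∀ j, F2 (F1 j) = j := by
        intro j
        by_cases h : j ∈ S
        · rw [hF1S j h, hF2lt _ (e₁ ⟨j, h⟩).2]
          simp
        · by_cases h' : j = i
          · rw [h', hF1i, hF2ki]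
          · rw [hF1o j h h', hF2o _ (e₂ ⟨j, h, h'⟩).2.1 (e₂ ⟨j, h, h'⟩).2.2]
            simp
      have hright : ∀ x, F1 (F2 x) = x := by
        intro x
        by_cases h : x < ki
        · rw [hF2lt x h, hF1S _ (e₁.symm ⟨x, h⟩).2]
          simp
        · by_cases h' : x = ki
          · rw [h', hF2ki, hF1i]
          · rw [hF2o x h h', hF1o _ (e₂.symm ⟨x, h, h'⟩).2.1 (e₂.symm ⟨x, h, h'⟩).2.2]
            simp
      let τ : Equiv.Perm (Fin N) := ⟨F1, F2, hleft, hright⟩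
      have hτS : ∀ j, τ j < τ i ↔ j ∈ S := by
        intro j
        show F1 j < F1 i ↔ j ∈ S
        rw [hF1i]
        by_cases h : j ∈ S
        · rw [hF1S j h]
          exact iff_of_true (e₁ ⟨j, h⟩).2 h
        · by_cases h' : j = i
          · rw [h', hF1i]
            exact iff_of_false (lt_irrefl ki) (h' ▸ h)
          · rw [hF1o j h h']
            exact iff_of_false (e₂ ⟨j, h, h'⟩).2.1 h
      refine ⟨⟨τ, hτS⟩, ?_⟩
      refine Prod.ext ?_ ?_
      · apply Equiv.ext
        rintro ⟨j, hj⟩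
        apply Subtype.ext
        simp only [f, Equiv.subtypeEquiv_apply]
        exact hF1S j hj
      · apply Equiv.ext
        rintro ⟨j, hj⟩
        apply Subtype.ext
        simp only [f, Equiv.subtypeEquiv_apply]
        exact hF1o j hj.1 hj.2
  rw [Fintype.card_of_bijective hbij, Fintype.card_prod]
  have c1 : Fintype.card {j : Fin N // j ∈ S} = k := Fintype.card_coe S
  have c2 : Fintype.card {x : Fin N // x < ki} = k := by
    rw [Fintype.card_subtype]
    have h : (Finset.univ.filter fun x : Fin N => x < ki) = Finset.Iio ki := by
      ext x; simp [Finset.mem_Iio]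
    rw [h, Fin.card_Iio]
  have c3 : Fintype.card {j : Fin N // j ∉ S ∧ j ≠ i} = N - k - 1 := by
    rw [Fintype.card_subtype]
    have h : (Finset.univ.filter fun j : Fin N => j ∉ S ∧ j ≠ i) =
        Finset.univ \ insert i S := by
      ext j; simp only [Finset.mem_filter, Finset.mem_univ, true_and, Finset.mem_sdiff,
        Finset.mem_insert]
      tauto
    rw [h, Finset.card_sdiff_of_subset (Finset.subset_univ _),
      Finset.card_insert_of_notMem hiS]
    simp only [Finset.card_univ, Fintype.card_fin]
    omega
  have c4 : Fintype.card {x : Fin N // ¬ x < ki ∧ x ≠ ki} = N - k - 1 := by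
    rw [Fintype.card_subtype]
    have h : (Finset.univ.filter fun x : Fin N => ¬ x < ki ∧ x ≠ ki) =
        Finset.univ \ Finset.Iic ki := by
      ext x
      simp only [Finset.mem_filter, Finset.mem_univ, true_and, Finset.mem_sdiff,
        Finset.mem_Iic, le_iff_lt_or_eq]
      tauto
    rw [h, Finset.card_sdiff_of_subset (Finset.subset_univ _), Fin.card_Iic]
    simp only [Finset.card_univ, Fintype.card_fin]
    have hkik : (ki : ℕ) = k := rfl
    omega
  rw [Fintype.card_equiv (Fintype.equivOfCardEq (c1.trans c2.symm)),
    Fintype.card_equiv (Fintype.equivOfCardEq (c3.trans c4.symm)), c1, c3]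

end Fiber

theorem shapley_subset_ordering_equivalence (N : ℕ) (hN : 1 ≤ N) (i : Fin N)
    (φ : Finset (Fin N) → ℝ) :
    ∑ S ∈ (Finset.univ.erase i).powerset, shapleyWeight N S * φ S =
      (1 / (Nat.factorial N : ℝ)) *
        ∑ σ : Equiv.Perm (Fin N),
          φ (Finset.univ.filter fun j => σ.symm j < σ.symm i) := by
  classical
  set g : Equiv.Perm (Fin N) → Finset (Fin N) :=
    fun σ => Finset.univ.filter fun j => σ.symm j < σ.symm i with hg
  have hmaps : ∀ σ ∈ (Finset.univ : Finset (Equiv.Perm (Fin N))),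
      g σ ∈ (Finset.univ.erase i).powerset := by
    intro σ _
    rw [Finset.mem_powerset]
    intro j hj
    simp only [g, Finset.mem_filter] at hj
    simp only [Finset.mem_erase, Finset.mem_univ, and_true]
    intro hji
    rw [hji] at hj
    exact lt_irrefl _ hj.2
  have hsum : ∑ σ : Equiv.Perm (Fin N), φ (g σ) =
      ∑ S ∈ (Finset.univ.erase i).powerset,
        ((Nat.factorial S.card * Nat.factorial (N - S.card - 1) : ℕ) : ℝ) * φ S := by
    rw [← Finset.sum_fiberwise_of_maps_to' hmaps (fun T => φ T)]
    refine Finset.sum_congr rfl ?_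
    intro S hS
    have hiS : i ∉ S := fun hmem =>
      (Finset.mem_erase.mp (Finset.mem_powerset.mp hS hmem)).1 rfl
    rw [Finset.sum_const, nsmul_eq_mul]
    congr 1
    rw [Nat.cast_inj]
    exact fiber_card i S hiS
  rw [hsum, Finset.mul_sum]
  refine Finset.sum_congr rfl ?_
  intro S _
  rw [shapleyWeight]
  have hfac : ((Nat.factorial N : ℝ)) ≠ 0 := by
    exact_mod_cast Nat.factorial_ne_zero N
  push_cast
  field_simp
end
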